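/- arXiv:0804.0746 — 4 statements merged into one kernel-verified Lean document; each statement's English description precedes it below -/
import Mathlib

section
/- Decomposition of the momentum under H¹ perturbations: if V₀ ∈ Z¹ and w ∈ H¹(ℝ,ℂ), then V₀ + w ∈ Z¹ and 𝒫(V₀ + w) = 𝒫(V₀) + (1/2)∫_ℝ⟨iw, w'⟩ + ∫_ℝ⟨iw, V₀'⟩. -/
open MeasureTheory Filter Set Topology Real

noncomputable section

/-- Real inner product on `ℂ`: `⟨z, w⟩ = Re (z̄ w)`. -/
def rInner (z w : ℂ) : ℝ := ((starRingEnd ℂ) z * w).re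

/-- Membership in the energy space `X¹`. -/
structure InX1 (w : ℝ → ℂ) : Prop where
  bdd : ∃ C, ∀ x, ‖w x‖ ≤ C
  diff : Differentiable ℝ w
  deriv_memL2 : MemLp (deriv w) 2 volume
  gl_memL2 : MemLp (fun x => (1 : ℝ) - ‖w x‖ ^ 2) 2 volume

/-- Membership in `Z¹`: `X¹` together with limits at `±∞`. -/
def InZ1 (w : ℝ → ℂ) : Prop :=
  InX1 w ∧ (∃ l, Tendsto w atTop (nhds l)) ∧ (∃ l, Tendsto w atBot (nhds l))

/-- The Ginzburg-Landau energy. -/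
def energy (w : ℝ → ℂ) : ℝ :=
  (1 / 2) * (∫ x, ‖deriv w x‖ ^ 2) + (1 / 4) * ∫ x, ((1 : ℝ) - ‖w x‖ ^ 2) ^ 2

/-- The black soliton `𝔳₀(x) = tanh (x / √2)`. -/
def blackSoliton (x : ℝ) : ℂ := (Real.tanh (x / Real.sqrt 2) : ℝ)

/-- The truncated momentum `P_R(v) = (1/2) ∫_{-R}^R ⟨iv, v'⟩`. -/
def PR (v : ℝ → ℂ) (R : ℝ) : ℝ :=
  (1 / 2) * ∫ x in (-R)..R, rInner (Complex.I * v x) (deriv v x)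

/-- The quantity whose limit mod `π` defines the untwisted momentum. -/
def upFun (v : ℝ → ℂ) (R : ℝ) : AddCircle (π : ℝ) :=
  ((PR v R - (1 / 2) * (Complex.arg (v R) - Complex.arg (v (-R))) : ℝ) : AddCircle (π : ℝ))

/-- The untwisted momentum `[p](v) ∈ ℝ/πℤ`. -/
def up (v : ℝ → ℂ) : AddCircle (π : ℝ) := limUnder atTop (upFun v)

/-- The momentum `𝒫(v)` as an improper integral. -/
def mom (v : ℝ → ℂ) : ℝ := limUnder atTop (PR v)

/-- The distance `d_{A,X¹}`. -/
def dX1 (A : ℝ) (v₁ v₂ : ℝ → ℂ) : ℝ :=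
  (⨆ x : Icc (-A) A, ‖v₁ x - v₂ x‖)
    + (∫ x, ‖deriv v₁ x - deriv v₂ x‖ ^ 2) ^ (1 / 2 : ℝ)
    + (∫ x, (‖v₁ x‖ - ‖v₂ x‖) ^ 2) ^ (1 / 2 : ℝ)

/-- Membership in `H¹(ℝ, ℂ)`. -/
structure MemH1 (w : ℝ → ℂ) : Prop where
  diff : Differentiable ℝ w
  memL2 : MemLp w 2 volume
  deriv_memL2 : MemLp (deriv w) 2 volume

/-- `Ψ : ℝ → ℝ → ℂ` (time then space) solves the Gross-Pitaevskii equation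
`i ∂_t Ψ + ∂_xx Ψ = Ψ (|Ψ|² - 1)`. -/
def IsGPSolution (Ψ : ℝ → ℝ → ℂ) : Prop :=
  ∀ t x, Complex.I * deriv (fun s => Ψ s x) t + deriv (deriv (Ψ t)) x
    = Ψ t x * ((‖Ψ t x‖ ^ 2 - 1 : ℝ) : ℂ)

/-- Continuity of `t ↦ Ψ(·, t) - Ψ(·, t₀)` into `H¹(ℝ)`. -/
def H1ContinuousFlow (Ψ : ℝ → ℝ → ℂ) : Prop :=
  ∀ t₀ : ℝ, Tendsto (fun t => eLpNorm (fun x => Ψ t x - Ψ t₀ x) 2 volume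
    + eLpNorm (fun x => deriv (Ψ t) x - deriv (Ψ t₀) x) 2 volume) (nhds t₀) (nhds 0)

/-! Writing `V = V₀ + w`, the density `⟨iV, V'⟩` splits as `⟨iV₀, V₀'⟩ + ⟨iw, w'⟩ + ⟨iw, V₀'⟩ +
⟨iV₀, w'⟩`, and integrating by parts on `[-R, R]` turns the last term into `⟨iw, V₀'⟩` plus the
boundary term `⟨iV₀, w⟩|_{-R}^{R}`. All integrands other than `⟨iV₀, V₀'⟩` are integrable on `ℝ`
(products of `L²` functions), and the boundary term vanishes as `R → ∞` since `V₀` is bounded and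
an `H¹` function tends to `0` at `±∞`. -/

open scoped InnerProductSpace ENNReal

theorem rInner_eq_inner (z w : ℂ) : rInner z w = ⟪z, w⟫_ℝ := by
  rw [rInner, Complex.inner, mul_comm]

theorem inner_I_mul_comm (a b : ℂ) : ⟪Complex.I * a, b⟫_ℝ = -⟪Complex.I * b, a⟫_ℝ := by
  simp only [Complex.inner, map_mul, Complex.conj_I, Complex.mul_re, Complex.mul_im,
    Complex.I_re, Complex.I_im, Complex.neg_re, Complex.neg_im, Complex.conj_re, Complex.conj_im]
  ring

section Inner

variable {E : Type*} [NormedAddCommGroup E] [InnerProductSpace ℝ E]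

theorem tendsto_inner_zero_of_bounded {β : Type*} {l : Filter β} {f g : β → E} {C : ℝ}
    (hf : ∀ x, ‖f x‖ ≤ C) (hg : Tendsto g l (𝓝 0)) :
    Tendsto (fun x => ⟪f x, g x⟫_ℝ) l (𝓝 0) :=
  squeeze_zero_norm
    (fun x => (norm_inner_le_norm _ _).trans (mul_le_mul_of_nonneg_right (hf x) (norm_nonneg _)))
    (by simpa using hg.norm.const_mul C)

variable {α : Type*} [MeasurableSpace α] {μ : Measure α} {f g : α → E}

theorem MeasureTheory.MemLp.inner {p q r : ℝ≥0∞} [ENNReal.HolderTriple p q r]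
    (hf : MemLp f p μ) (hg : MemLp g q μ) : MemLp (fun x => ⟪f x, g x⟫_ℝ) r μ :=
  hf.of_bilin (fun a b => ⟪a, b⟫_ℝ) 1 hg (hf.1.inner hg.1)
    (ae_of_all _ fun x => by simpa using nnnorm_inner_le_nnnorm (f x) (g x))

theorem MeasureTheory.MemLp.integrable_inner (hf : MemLp f 2 μ) (hg : MemLp g 2 μ) :
    Integrable (fun x => ⟪f x, g x⟫_ℝ) μ :=
  memLp_one_iff_integrable.mp (hf.inner hg)

end Inner

section RealLine

variable {E : Type*} [NormedAddCommGroup E]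

theorem MeasureTheory.MemLp.intervalIntegrable {f : ℝ → E} {p : ℝ≥0∞} (hf : MemLp f p volume)
    (hp : 1 ≤ p) (a b : ℝ) : IntervalIntegrable f volume a b :=
  ((hf.locallyIntegrable hp).integrableOn_isCompact isCompact_uIcc).intervalIntegrable

theorem Continuous.exists_norm_le_of_tendsto_atTop_atBot {f : ℝ → E} (hf : Continuous f)
    {a b : E} (ha : Tendsto f atTop (𝓝 a)) (hb : Tendsto f atBot (𝓝 b)) :
    ∃ C, ∀ x, ‖f x‖ ≤ C := by
  obtain ⟨C, hC⟩ := isBounded_iff_forall_norm_le.mp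
    (hf.isBounded_range_iff_isBigO_atTop_atBot.mpr ⟨ha.isBigO_one ℝ, hb.isBigO_one ℝ⟩)
  exact ⟨C, fun x => hC _ (mem_range_self x)⟩

variable [InnerProductSpace ℝ E]

/-- `‖f‖²` and its derivative `2⟪f, f'⟫` are integrable, so `‖f‖²` tends to `0` at `±∞`. -/
theorem tendsto_zero_of_memLp_two_of_deriv {f : ℝ → E} (hf : Differentiable ℝ f)
    (hf2 : MemLp f 2 volume) (hf2' : MemLp (deriv f) 2 volume) :
    Tendsto f atTop (𝓝 0) ∧ Tendsto f atBot (𝓝 0) := by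
  have hderiv : ∀ x, HasDerivAt (‖f ·‖ ^ 2) (2 * ⟪f x, deriv f x⟫_ℝ) x :=
    fun x => (hf x).hasDerivAt.norm_sq
  have hint' : Integrable (fun x => 2 * ⟪f x, deriv f x⟫_ℝ) :=
    (hf2.integrable_inner hf2').const_mul 2
  have hint : Integrable (‖f ·‖ ^ 2) := (memLp_two_iff_integrable_sq_norm hf2.1).mp hf2
  have hsq_top := tendsto_zero_of_hasDerivAt_of_integrableOn_Ioi (a := 0)
    (fun x _ => hderiv x) hint'.integrableOn hint.integrableOn
  have hsq_bot := tendsto_zero_of_hasDerivAt_of_integrableOn_Iic (a := 0)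
    (fun x _ => hderiv x) hint'.integrableOn hint.integrableOn
  constructor <;> rw [tendsto_zero_iff_norm_tendsto_zero]
  · simpa [Real.sqrt_sq (norm_nonneg _)] using hsq_top.sqrt
  · simpa [Real.sqrt_sq (norm_nonneg _)] using hsq_bot.sqrt

theorem integral_inner_I_mul_deriv {v w : ℝ → ℂ} (hv : Differentiable ℝ v)
    (hw : Differentiable ℝ w) {a b : ℝ}
    (hvw : IntervalIntegrable (fun x => ⟪Complex.I * v x, deriv w x⟫_ℝ) volume a b)
    (hwv : IntervalIntegrable (fun x => ⟪Complex.I * w x, deriv v x⟫_ℝ) volume a b) :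
    ∫ x in a..b, ⟪Complex.I * v x, deriv w x⟫_ℝ
      = (∫ x in a..b, ⟪Complex.I * w x, deriv v x⟫_ℝ)
        + (⟪Complex.I * v b, w b⟫_ℝ - ⟪Complex.I * v a, w a⟫_ℝ) := by
  have hderiv : ∀ x, HasDerivAt (fun y => ⟪Complex.I * v y, w y⟫_ℝ)
      (⟪Complex.I * v x, deriv w x⟫_ℝ - ⟪Complex.I * w x, deriv v x⟫_ℝ) x := fun x => by
    have h := ((hv x).hasDerivAt.const_mul Complex.I).inner ℝ (hw x).hasDerivAt
    rwa [inner_I_mul_comm (deriv v x), ← sub_eq_add_neg] at h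
  rw [← intervalIntegral.integral_eq_sub_of_hasDerivAt (fun x _ => hderiv x) (hvw.sub hwv),
    intervalIntegral.integral_sub hvw hwv]
  ring

end RealLine

namespace MemH1

variable {w : ℝ → ℂ}

theorem tendsto_zero (hw : MemH1 w) : Tendsto w atTop (𝓝 0) ∧ Tendsto w atBot (𝓝 0) :=
  tendsto_zero_of_memLp_two_of_deriv hw.diff hw.memL2 hw.deriv_memL2

theorem exists_bound (hw : MemH1 w) : ∃ C, ∀ x, ‖w x‖ ≤ C :=
  hw.diff.continuous.exists_norm_le_of_tendsto_atTop_atBot hw.tendsto_zero.1 hw.tendsto_zero.2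

theorem memLp_top (hw : MemH1 w) : MemLp w ∞ volume :=
  let ⟨C, hC⟩ := hw.exists_bound
  memLp_top_of_bound hw.diff.continuous.aestronglyMeasurable C (ae_of_all _ hC)

end MemH1

namespace InX1

variable {V w : ℝ → ℂ}

theorem memLp_top (hV : InX1 V) : MemLp V ∞ volume :=
  let ⟨C, hC⟩ := hV.bdd
  memLp_top_of_bound hV.diff.continuous.aestronglyMeasurable C (ae_of_all _ hC)

theorem deriv_add (hV : InX1 V) (hw : MemH1 w) :
    deriv (fun x => V x + w x) = fun x => deriv V x + deriv w x :=
  funext fun x => ((hV.diff x).hasDerivAt.add (hw.diff x).hasDerivAt).deriv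

theorem add_memH1 (hV : InX1 V) (hw : MemH1 w) : InX1 (fun x => V x + w x) where
  bdd := by
    obtain ⟨C, hC⟩ := hV.bdd
    obtain ⟨D, hD⟩ := hw.exists_bound
    exact ⟨C + D, fun x => (norm_add_le _ _).trans (add_le_add (hC x) (hD x))⟩
  diff := hV.diff.add hw.diff
  deriv_memL2 := by
    rw [hV.deriv_add hw]
    exact hV.deriv_memL2.add hw.deriv_memL2
  gl_memL2 := by
    have h := hV.gl_memL2.sub (((hV.memLp_top.inner hw.memL2).const_mul 2).add
      (hw.memLp_top.inner hw.memL2))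
    convert h using 2 with x
    simp only [Pi.sub_apply, Pi.add_apply, norm_add_sq_real, real_inner_self_eq_norm_sq]
    ring

theorem PR_add_memH1 (hV : InX1 V) (hw : MemH1 w) (R : ℝ) :
    PR (fun x => V x + w x) R
      = PR V R + (1 / 2) * (∫ x in (-R)..R, ⟪Complex.I * w x, deriv w x⟫_ℝ)
        + (∫ x in (-R)..R, ⟪Complex.I * w x, deriv V x⟫_ℝ)
        + (1 / 2) * (⟪Complex.I * V R, w R⟫_ℝ - ⟪Complex.I * V (-R), w (-R)⟫_ℝ) := by
  have hIV := hV.memLp_top.const_mul Complex.I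
  have hIw := hw.memL2.const_mul Complex.I
  have hVV := (hIV.inner hV.deriv_memL2).intervalIntegrable one_le_two (-R) R
  have hVw := (hIV.inner hw.deriv_memL2).intervalIntegrable one_le_two (-R) R
  have hww := (hIw.integrable_inner hw.deriv_memL2).intervalIntegrable (a := -R) (b := R)
  have hwV := (hIw.integrable_inner hV.deriv_memL2).intervalIntegrable (a := -R) (b := R)
  have hsplit : ∀ x ∈ uIcc (-R) R,
      ⟪Complex.I * (V x + w x), deriv (fun y => V y + w y) x⟫_ℝ
        = ⟪Complex.I * V x, deriv V x⟫_ℝ + ⟪Complex.I * w x, deriv w x⟫_ℝ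
          + ⟪Complex.I * w x, deriv V x⟫_ℝ + ⟪Complex.I * V x, deriv w x⟫_ℝ := fun x _ => by
    rw [hV.deriv_add hw]
    simp only [mul_add, inner_add_left, inner_add_right]
    ring
  simp only [PR, rInner_eq_inner]
  rw [intervalIntegral.integral_congr hsplit, intervalIntegral.integral_add
      ((hVV.add hww).add hwV) hVw, intervalIntegral.integral_add (hVV.add hww) hwV,
    intervalIntegral.integral_add hVV hww,
    integral_inner_I_mul_deriv hV.diff hw.diff hVw hwV]
  ring

end InX1

theorem InZ1.add_memH1 {V w : ℝ → ℂ} (hV : InZ1 V) (hw : MemH1 w) :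
    InZ1 (fun x => V x + w x) := by
  obtain ⟨hX, ⟨a, ha⟩, ⟨b, hb⟩⟩ := hV
  exact ⟨hX.add_memH1 hw, ⟨a + 0, ha.add hw.tendsto_zero.1⟩, ⟨b + 0, hb.add hw.tendsto_zero.2⟩⟩

/-- **Decomposition of the momentum under `H¹` perturbations**:
`𝒫(V₀ + w) = 𝒫(V₀) + (1/2)∫⟨iw, w'⟩ + ∫⟨iw, V₀'⟩`. -/
theorem momentum_add_H1 (V₀ w : ℝ → ℂ) (hV : InZ1 V₀) (hw : MemH1 w) :
    InZ1 (fun x => V₀ x + w x) ∧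
      ∀ P₀ : ℝ, Tendsto (PR V₀) atTop (nhds P₀) →
        Tendsto (PR (fun x => V₀ x + w x)) atTop
          (nhds (P₀ + (1 / 2) * (∫ x, rInner (Complex.I * w x) (deriv w x))
            + ∫ x, rInner (Complex.I * w x) (deriv V₀ x))) := by
  refine ⟨hV.add_memH1 hw, fun P₀ hP₀ => ?_⟩
  obtain ⟨C, hC⟩ := hV.1.bdd
  have hIV : ∀ x, ‖Complex.I * V₀ x‖ ≤ C := by simpa using hC
  have hIw := hw.memL2.const_mul Complex.I
  have hww := intervalIntegral_tendsto_integral (hIw.integrable_inner hw.deriv_memL2)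
    tendsto_neg_atTop_atBot tendsto_id
  have hwV := intervalIntegral_tendsto_integral (hIw.integrable_inner hV.1.deriv_memL2)
    tendsto_neg_atTop_atBot tendsto_id
  have hright := tendsto_inner_zero_of_bounded hIV hw.tendsto_zero.1
  have hleft := tendsto_inner_zero_of_bounded (fun R => hIV (-R))
    (hw.tendsto_zero.2.comp tendsto_neg_atTop_atBot)
  have hlim := ((hP₀.add (hww.const_mul (1 / 2))).add hwV).add
    ((hright.sub hleft).const_mul (1 / 2))
  rw [sub_self, mul_zero, add_zero] at hlim
  simp only [rInner_eq_inner]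
  exact hlim.congr fun R => (hV.1.PR_add_memH1 hw R).symm
end
end

section
/- Finitely many bad points for maps of bounded energy: let E > 0 and 0 < δ₀ < 1. There exists an integer ℓ₀ = ℓ₀(E, δ₀), depending only on E and δ₀, such that for any v ∈ X¹ with E(v) ≤ E, either |1 − |v(x)|| < δ₀ for all x ∈ ℝ, or there exist ℓ ≤ ℓ₀ points x₁, …, x_ℓ ∈ ℝ with |1 − |v(x_i)|| ≥ δ₀ for each 1 ≤ i ≤ ℓ, and |1 − |v(x)|| ≤ δ₀ for all x ∈ ℝ outside the union of the intervals [x_i − 1, x_i + 1]. -/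
open MeasureTheory Filter Set Topology Real

noncomputable section

/-! A point `p` with `δ ≤ |1 - ‖v p‖|` carries energy at least `δ² / 16` on `(p, p + 1]`: either
`|1 - ‖v‖| ≥ δ / 2` on the whole interval and the potential term pays, or `v` moves by `δ / 2`
inside it and, by the fundamental theorem of calculus and Young's inequality, the kinetic term pays.
So a `1`-separated set of such points has at most `16 E / δ²` elements, and a maximal one is a
`1`-net of all of them. -/

open Metric
open scoped NNReal ENNReal

section EnergyDensity

variable {E : Type*} [NormedAddCommGroup E] [NormedSpace ℝ E]

def energyDensity (v : ℝ → E) (x : ℝ) : ℝ :=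
  (1 / 2) * ‖deriv v x‖ ^ 2 + (1 / 4) * ((1 : ℝ) - ‖v x‖ ^ 2) ^ 2

lemma energyDensity_nonneg (v : ℝ → E) (x : ℝ) : 0 ≤ energyDensity v x := by
  unfold energyDensity; positivity

lemma integrableOn_energyDensity_Ioc {v : ℝ → E} (hv : Differentiable ℝ v)
    (hv' : MemLp (deriv v) 2 volume) (a b : ℝ) :
    IntegrableOn (energyDensity v) (Ioc a b) :=
  (hv'.norm.integrable_sq.integrableOn.const_mul _).add
    (((continuous_const.sub (hv.continuous.norm.pow 2)).pow 2).integrableOn_Ioc.const_mul _)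

lemma norm_sub_le_of_memLp_deriv [CompleteSpace E] {v : ℝ → E} (hv : Differentiable ℝ v)
    (hv' : MemLp (deriv v) 2 volume) {a b ε : ℝ} (hab : a ≤ b) (hε : 0 < ε) :
    ‖v b - v a‖ ≤ (b - a) * (ε / 4) + (∫ x in Ioc a b, ‖deriv v x‖ ^ 2) / ε := by
  have hsq : IntervalIntegrable (fun x => ‖deriv v x‖ ^ 2) volume a b :=
    hv'.norm.integrable_sq.intervalIntegrable
  have hderiv : IntervalIntegrable (deriv v) volume a b :=
    (intervalIntegrable_iff_integrableOn_Ioc_of_le hab).2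
      ((hv'.restrict (Ioc a b)).integrable one_le_two)
  calc ‖v b - v a‖ = ‖∫ x in a..b, deriv v x‖ := by
        rw [intervalIntegral.integral_deriv_eq_sub (fun x _ => hv x) hderiv]
    _ ≤ ∫ x in a..b, ‖deriv v x‖ := intervalIntegral.norm_integral_le_integral_norm hab
    _ ≤ ∫ x in a..b, (ε / 4 + ‖deriv v x‖ ^ 2 / ε) := by
        refine intervalIntegral.integral_mono_on hab hderiv.norm
          (intervalIntegrable_const.add (hsq.div_const ε)) fun x _ => ?_
        -- Young's inequality `t ≤ ε / 4 + t ^ 2 / ε`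
        rw [← mul_le_mul_iff_of_pos_right hε, add_mul, div_mul_cancel₀ _ hε.ne']
        nlinarith [sq_nonneg (ε / 2 - ‖deriv v x‖)]
    _ = (b - a) * (ε / 4) + (∫ x in Ioc a b, ‖deriv v x‖ ^ 2) / ε := by
        rw [intervalIntegral.integral_add intervalIntegrable_const (hsq.div_const ε),
          intervalIntegral.integral_const, intervalIntegral.integral_div,
          intervalIntegral.integral_of_le hab, smul_eq_mul]

lemma sq_one_sub_le_sq_one_sub_sq {r : ℝ} (hr : 0 ≤ r) : (1 - r) ^ 2 ≤ (1 - r ^ 2) ^ 2 := by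
  nlinarith [sq_nonneg (1 - r), mul_nonneg (sq_nonneg (1 - r)) hr]

lemma setIntegral_energyDensity_ge_of_far {v : ℝ → E} (hv : Differentiable ℝ v)
    (hv' : MemLp (deriv v) 2 volume) {δ p : ℝ} (hδ : 0 ≤ δ)
    (hfar : ∀ y ∈ Ioc p (p + 1), δ / 2 ≤ |1 - ‖v y‖|) :
    δ ^ 2 / 16 ≤ ∫ x in Ioc p (p + 1), energyDensity v x := by
  have hpot : ∀ x ∈ Ioc p (p + 1), δ ^ 2 / 16 ≤ energyDensity v x := by
    intro x hx
    have h1 : (δ / 2) ^ 2 ≤ (1 - ‖v x‖) ^ 2 := by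
      simpa only [sq_abs] using sq_le_sq' (by linarith [abs_nonneg (1 - ‖v x‖)]) (hfar x hx)
    have h2 := sq_one_sub_le_sq_one_sub_sq (norm_nonneg (v x))
    unfold energyDensity
    nlinarith [sq_nonneg ‖deriv v x‖]
  simpa [Real.volume_Ioc] using setIntegral_ge_of_const_le measurableSet_Ioc
    (by simp [Real.volume_Ioc]) hpot (integrableOn_energyDensity_Ioc hv hv' p (p + 1))

lemma setIntegral_energyDensity_ge_of_jump [CompleteSpace E] {v : ℝ → E} (hv : Differentiable ℝ v)
    (hv' : MemLp (deriv v) 2 volume) {δ p y : ℝ} (hδ : 0 < δ) (hy : y ∈ Ioc p (p + 1))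
    (hjump : δ ≤ ‖v y - v p‖) :
    δ ^ 2 / 2 ≤ ∫ x in Ioc p (p + 1), energyDensity v x := by
  have hsq : Integrable (fun x => ‖deriv v x‖ ^ 2) := hv'.norm.integrable_sq
  set K := ∫ x in Ioc p (p + 1), ‖deriv v x‖ ^ 2
  have hKy : ∫ x in Ioc p y, ‖deriv v x‖ ^ 2 ≤ K :=
    setIntegral_mono_set hsq.integrableOn (.of_forall fun x => sq_nonneg _)
      (Ioc_subset_Ioc le_rfl hy.2).eventuallyLE
  have hK : δ ^ 2 ≤ K := by
    have h := norm_sub_le_of_memLp_deriv hv hv' hy.1.le (mul_pos two_pos hδ)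
    have h' : (∫ x in Ioc p y, ‖deriv v x‖ ^ 2) / (2 * δ) ≤ K / (2 * δ) := by gcongr
    have hdiv : K / (2 * δ) * (2 * δ) = K := div_mul_cancel₀ _ (by positivity)
    nlinarith [hy.2]
  have hkin : (1 / 2) * K ≤ ∫ x in Ioc p (p + 1), energyDensity v x := by
    rw [← integral_const_mul]
    refine setIntegral_mono_on (hsq.integrableOn.const_mul _)
      (integrableOn_energyDensity_Ioc hv hv' p (p + 1)) measurableSet_Ioc fun x _ => ?_
    unfold energyDensity
    nlinarith [sq_nonneg ((1 : ℝ) - ‖v x‖ ^ 2)]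
  linarith

lemma setIntegral_energyDensity_ge [CompleteSpace E] {v : ℝ → E} (hv : Differentiable ℝ v)
    (hv' : MemLp (deriv v) 2 volume) {δ p : ℝ} (hδ : 0 < δ) (hp : δ ≤ |1 - ‖v p‖|) :
    δ ^ 2 / 16 ≤ ∫ x in Ioc p (p + 1), energyDensity v x := by
  by_cases hfar : ∀ y ∈ Ioc p (p + 1), δ / 2 ≤ |1 - ‖v y‖|
  · exact setIntegral_energyDensity_ge_of_far hv hv' hδ.le hfar
  push Not at hfar
  obtain ⟨y, hy, hnear⟩ := hfar
  have hjump : δ / 2 ≤ ‖v y - v p‖ := by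
    have := abs_norm_sub_norm_le (v y) (v p)
    have := abs_sub_abs_le_abs_sub (1 - ‖v p‖) (1 - ‖v y‖)
    rw [sub_sub_sub_cancel_left] at this
    linarith
  have := setIntegral_energyDensity_ge_of_jump hv hv' (half_pos hδ) hy hjump
  nlinarith [sq_nonneg δ]

end EnergyDensity

lemma Set.encard_le_coe_of_forall_finset_card_le {α : Type*} {s : Set α} {n : ℕ}
    (h : ∀ t : Finset α, ↑t ⊆ s → t.card ≤ n) : s.encard ≤ n := by
  rcases s.finite_or_infinite with hs | hs
  · rw [hs.encard_eq_coe_toFinset_card]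
    exact_mod_cast h _ hs.coe_toFinset.subset
  · obtain ⟨t, hts, ht⟩ := hs.exists_subset_card_eq (n + 1)
    have := h t hts
    omega

lemma pairwiseDisjoint_Ioc_of_isSeparated {r : ℝ≥0} {s : Set ℝ} (hs : IsSeparated r s) :
    s.PairwiseDisjoint fun a => Ioc a (a + r) := by
  intro a ha b hb hab
  have hr : (r : ℝ≥0∞) < edist a b := hs ha hb hab
  rw [edist_dist, ENNReal.coe_lt_ofReal, Real.dist_eq] at hr
  rw [Function.onFun, Set.Ioc_disjoint_Ioc]
  rcases abs_cases (a - b) with ⟨h, _⟩ | ⟨h, _⟩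
  · exact (min_le_right _ _).trans (le_max_of_le_left (by linarith))
  · exact (min_le_left _ _).trans (le_max_of_le_right (by linarith))

lemma card_mul_le_integral_of_isSeparated {f : ℝ → ℝ} (hf : Integrable f) (hf₀ : ∀ x, 0 ≤ f x)
    {c : ℝ} {S : Finset ℝ} (hS : IsSeparated 1 (S : Set ℝ))
    (hc : ∀ a ∈ S, c ≤ ∫ x in Ioc a (a + 1), f x) :
    S.card * c ≤ ∫ x, f x :=
  calc S.card * c ≤ ∑ a ∈ S, ∫ x in Ioc a (a + 1), f x := by
        simpa only [nsmul_eq_mul] using Finset.card_nsmul_le_sum S _ c hc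
    _ = ∫ x in ⋃ a ∈ S, Ioc a (a + 1), f x := by
        refine (integral_biUnion_finset S (fun a _ => measurableSet_Ioc) ?_
          fun a _ => hf.integrableOn).symm
        have hdisj := pairwiseDisjoint_Ioc_of_isSeparated (r := 1) hS
        simp only [NNReal.coe_one] at hdisj
        exact hdisj
    _ ≤ ∫ x, f x := setIntegral_le_integral hf (.of_forall hf₀)

lemma integrable_energyDensity {v : ℝ → ℂ} (hv : InX1 v) : Integrable (energyDensity v) :=
  (hv.deriv_memL2.norm.integrable_sq.const_mul _).add (hv.gl_memL2.integrable_sq.const_mul _)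

lemma energy_eq_integral_energyDensity {v : ℝ → ℂ} (hv : InX1 v) :
    energy v = ∫ x, energyDensity v x := by
  unfold energy energyDensity
  rw [integral_add (hv.deriv_memL2.norm.integrable_sq.const_mul _)
    (hv.gl_memL2.integrable_sq.const_mul _), integral_const_mul, integral_const_mul]

lemma packingNumber_le_of_energy_le {v : ℝ → ℂ} (hv : InX1 v) {E₀ δ : ℝ} (hδ : 0 < δ)
    (hE : energy v ≤ E₀) :
    packingNumber 1 {x | δ ≤ |1 - ‖v x‖|} ≤ ⌊16 * E₀ / δ ^ 2⌋₊ := by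
  refine iSup₂_le fun C hCA => iSup_le fun hC =>
    Set.encard_le_coe_of_forall_finset_card_le fun S hSC => ?_
  have h := card_mul_le_integral_of_isSeparated (integrable_energyDensity hv)
    (energyDensity_nonneg v) (hC.subset hSC)
    fun a ha => setIntegral_energyDensity_ge hv.diff hv.deriv_memL2 hδ (hCA (hSC ha))
  rw [← energy_eq_integral_energyDensity hv] at h
  refine Nat.le_floor ((le_div_iff₀ (by positivity)).2 ?_)
  linarith

theorem finitely_many_bad_points_general (E₀ δ₀ : ℝ) (hδ₀ : 0 < δ₀) :
    ∃ ℓ₀ : ℕ, ∀ v : ℝ → ℂ, InX1 v → energy v ≤ E₀ →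
      (∀ x : ℝ, |1 - ‖v x‖| < δ₀) ∨
      ∃ ℓ : ℕ, ℓ ≤ ℓ₀ ∧ ∃ pts : Fin ℓ → ℝ,
        (∀ i, δ₀ ≤ |1 - ‖v (pts i)‖|) ∧
        ∀ x : ℝ, x ∉ (⋃ i, Icc (pts i - 1) (pts i + 1)) → |1 - ‖v x‖| ≤ δ₀ := by
  refine ⟨⌊16 * E₀ / δ₀ ^ 2⌋₊, fun v hv hE => Or.inr ?_⟩
  set A := {x | δ₀ ≤ |1 - ‖v x‖|}
  have hpack := packingNumber_le_of_energy_le hv hδ₀ hE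
  have hfin : packingNumber 1 A ≠ ⊤ := ne_top_of_le_ne_top (ENat.natCast_ne_top _) hpack
  have hCcard : (maximalSeparatedSet 1 A).encard ≤ ⌊16 * E₀ / δ₀ ^ 2⌋₊ :=
    (encard_maximalSeparatedSet hfin).trans_le hpack
  obtain ⟨ℓ, pts, hpts⟩ := (Set.finite_of_encard_le_coe hCcard).fin_embedding
  refine ⟨ℓ, ?_, pts,
    fun i => (maximalSeparatedSet_subset (hpts ▸ mem_range_self i) : pts i ∈ A), ?_⟩
  · rw [← hpts] at hCcard
    simpa using pts.injective.encard_range.trans hCcard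
  · intro x hx
    by_contra hbad
    obtain ⟨_, hc, hxc⟩ := mem_iUnion₂.1 <|
      (isCover_maximalSeparatedSet hfin).subset_iUnion_closedBall (le_of_not_ge hbad)
    rw [← hpts] at hc
    obtain ⟨i, rfl⟩ := hc
    exact hx (mem_iUnion.2 ⟨i, by simpa [Real.closedBall_eq_Icc] using hxc⟩)

/-- **Finitely many bad points for maps of bounded energy.** -/
theorem finitely_many_bad_points (E₀ δ₀ : ℝ) (hE₀ : 0 < E₀) (hδ₀ : 0 < δ₀) (hδ₀' : δ₀ < 1) :
    ∃ ℓ₀ : ℕ, ∀ v : ℝ → ℂ, InX1 v → energy v ≤ E₀ →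
      (∀ x : ℝ, |1 - ‖v x‖| < δ₀) ∨
      ∃ ℓ : ℕ, ℓ ≤ ℓ₀ ∧ ∃ pts : Fin ℓ → ℝ,
        (∀ i, δ₀ ≤ |1 - ‖v (pts i)‖|) ∧
        ∀ x : ℝ, x ∉ (⋃ i, Icc (pts i - 1) (pts i + 1)) → |1 - ‖v x‖| ≤ δ₀ :=
  finitely_many_bad_points_general E₀ δ₀ hδ₀
end
end

section
/- Localized evolution of the center of mass: let χ ∈ C_c^∞(ℝ,ℝ), and let v : ℝ × ℝ → ℂ be a solution of the Gross–Pitaevskii equation i∂_tv + ∂_xxv = v(|v|²−1) with v(·,t) ∈ X¹ for all t, belonging to C¹(ℝ, H^{−1}_loc(ℝ)) ∩ C⁰(ℝ, H¹_loc(ℝ)). Then for all t ∈ ℝ, (d/dt) ∫_ℝ x (|v(x,t)|² − 1) χ(x) dx = 2 ∫_ℝ ⟨i v(x,t), ∂_x v(x,t)⟩ ∂_x(x χ(x)) dx. -/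
open MeasureTheory Filter Set Topology Real

noncomputable section

lemma rInner_comm (z w : ℂ) : rInner z w = rInner w z := by
  simp [rInner, Complex.mul_re]; ring

lemma rInner_self (z : ℂ) : rInner z z = ‖z‖ ^ 2 := by
  simp [rInner, Complex.mul_re, ← Complex.normSq_apply, Complex.normSq_eq_norm_sq]

lemma hasDerivAt_rInner {a b : ℝ → ℂ} {a' b' : ℂ} {x : ℝ}
    (ha : HasDerivAt a a' x) (hb : HasDerivAt b b' x) :
    HasDerivAt (fun y => rInner (a y) (b y)) (rInner a' (b x) + rInner (a x) b') x := by
  have hre : ∀ {c : ℝ → ℂ} {c' : ℂ}, HasDerivAt c c' x →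
      HasDerivAt (fun y => (c y).re) c'.re x := fun h =>
    Complex.reCLM.hasFDerivAt.comp_hasDerivAt x h
  have him : ∀ {c : ℝ → ℂ} {c' : ℂ}, HasDerivAt c c' x →
      HasDerivAt (fun y => (c y).im) c'.im x := fun h =>
    Complex.imCLM.hasFDerivAt.comp_hasDerivAt x h
  have H := ((hre ha).mul (hre hb)).add ((him ha).mul (him hb))
  refine (H.congr_deriv ?_).congr_of_eventuallyEq (Eventually.of_forall fun y => ?_)
  · simp only [rInner, Complex.mul_re, Complex.conj_re, Complex.conj_im]; ring
  · simp only [rInner, Complex.mul_re, Complex.conj_re, Complex.conj_im, Pi.add_apply,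
      Pi.mul_apply]; ring

lemma continuous_rInner : Continuous fun p : ℂ × ℂ => rInner p.1 p.2 := by
  unfold rInner; fun_prop

lemma gp_pointwise (w w' w'' u : ℂ) (c : ℝ) (h : Complex.I * u + w'' = w * (c : ℂ)) :
    rInner (Complex.I * w') w' + rInner (Complex.I * w) w'' = -rInner w u := by
  have hw : w'' = w * (c : ℂ) - Complex.I * u := by linear_combination h
  subst hw
  simp [rInner, Complex.mul_re, Complex.mul_im]
  ring

/-- **Localized evolution of the center of mass** along the Gross-Pitaevskii flow. -/
theorem localized_center_of_mass_evolution (χ : ℝ → ℝ)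
    (hχ : ContDiff ℝ (⊤ : ℕ∞) χ) (hχc : HasCompactSupport χ)
    (v : ℝ → ℝ → ℂ)
    (hX1 : ∀ t, InX1 (v t))
    (hGP : IsGPSolution v)
    (htdiff : ∀ x, Differentiable ℝ (fun t => v t x))
    (hxdiff2 : ∀ t, Differentiable ℝ (deriv (v t)))
    (hcont : Continuous fun p : ℝ × ℝ => v p.1 p.2)
    (hcont_x : Continuous fun p : ℝ × ℝ => deriv (v p.1) p.2)
    (hcont_t : Continuous fun p : ℝ × ℝ => deriv (fun s => v s p.2) p.1) :
    ∀ t : ℝ, HasDerivAt (fun s => ∫ x, x * (‖v s x‖ ^ 2 - 1) * χ x)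
      (2 * ∫ x, rInner (Complex.I * v t x) (deriv (v t) x) * deriv (fun y => y * χ y) x)
      t := by
  intro t
  set φ : ℝ → ℝ := fun y => y * χ y with hφdef
  have hφ : ContDiff ℝ (⊤ : ℕ∞) φ := contDiff_id.mul hχ
  have hφc : HasCompactSupport φ := hχc.mul_left
  have hφcont : Continuous φ := hφ.continuous
  have hφ'cont : Continuous (deriv φ) := hφ.continuous_deriv (by simp)
  have hφ'c : HasCompactSupport (deriv φ) := hφc.deriv
  -- continuity helpers at fixed time t
  have cv : Continuous (v t) := hcont.comp (Continuous.prodMk_right t)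
  have cvx : Continuous (deriv (v t)) := hcont_x.comp (Continuous.prodMk_right t)
  have cvt : Continuous (fun x => deriv (fun s => v s x) t) :=
    hcont_t.comp (Continuous.prodMk_right t)
  -- the time-derivative integrand
  set F' : ℝ → ℝ → ℝ :=
    fun s x => φ x * (2 * rInner (v s x) (deriv (fun r => v r x) s)) with hF'def
  have hF'cont : Continuous fun p : ℝ × ℝ => F' p.1 p.2 := by
    apply (hφcont.comp continuous_snd).mul
    apply continuous_const.mul
    exact continuous_rInner.comp (hcont.prodMk hcont_t)
  -- bound on ball t 1
  obtain ⟨C, hC⟩ : ∃ C, ∀ p ∈ (Metric.closedBall t 1 ×ˢ tsupport φ),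
      ‖F' p.1 p.2‖ ≤ C :=
    ((isCompact_closedBall t 1).prod hφc).exists_bound_of_continuousOn
      hF'cont.continuousOn
  set bound : ℝ → ℝ := (tsupport φ).indicator fun _ => C with hbdef
  have hbound_int : Integrable bound := by
    rw [hbdef, integrable_indicator_iff (isClosed_tsupport φ).measurableSet]
    exact integrableOn_const hφc.measure_lt_top.ne
  have h_bound : ∀ x, ∀ s ∈ Metric.ball t 1, ‖F' s x‖ ≤ bound x := by
    intro x s hs
    by_cases hx : x ∈ tsupport φ
    · rw [hbdef, indicator_of_mem hx]
      exact hC (s, x) ⟨Metric.ball_subset_closedBall hs, hx⟩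
    · rw [hbdef, indicator_of_notMem hx]
      have : φ x = 0 := image_eq_zero_of_notMem_tsupport hx
      simp [hF'def, this]
  -- pointwise time differentiability
  have h_diff : ∀ x, ∀ s ∈ Metric.ball t 1,
      HasDerivAt (fun r => x * (‖v r x‖ ^ 2 - 1) * χ x) (F' s x) s := by
    intro x s _
    have hw : HasDerivAt (fun r => v r x) (deriv (fun r => v r x) s) s :=
      (htdiff x s).hasDerivAt
    have hq := hasDerivAt_rInner hw hw
    have hns : HasDerivAt (fun r => ‖v r x‖ ^ 2)
        (2 * rInner (v s x) (deriv (fun r => v r x) s)) s := by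
      convert hq using 1
      · funext r; rw [← rInner_self]
      · rw [rInner_comm]; ring
    have h2 := ((hns.sub_const 1).const_mul x).mul_const (χ x)
    refine h2.congr_deriv ?_
    simp only [hF'def, hφdef]; ring
  -- side conditions
  have hF_meas : ∀ᶠ s in nhds t,
      AEStronglyMeasurable (fun x => x * (‖v s x‖ ^ 2 - 1) * χ x) volume := by
    refine Eventually.of_forall fun s => ?_
    have cs : Continuous fun x => v s x := hcont.comp (Continuous.prodMk_right s)
    exact ((continuous_id.mul (((cs.norm.pow 2)).sub continuous_const)).mul
      hχ.continuous).aestronglyMeasurable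
  have hF_int : Integrable (fun x => x * (‖v t x‖ ^ 2 - 1) * χ x) := by
    apply Continuous.integrable_of_hasCompactSupport
    · exact (continuous_id.mul ((cv.norm.pow 2).sub continuous_const)).mul hχ.continuous
    · exact hχc.mul_left
  have hF'_meas : AEStronglyMeasurable (F' t) volume :=
    (hF'cont.comp (Continuous.prodMk_right t)).aestronglyMeasurable
  obtain ⟨-, hder⟩ := hasDerivAt_integral_of_dominated_loc_of_deriv_le (Metric.ball_mem_nhds t one_pos) hF_meas
    hF_int hF'_meas (Eventually.of_forall h_bound) hbound_int (Eventually.of_forall h_diff)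
  -- spatial integration by parts
  set g : ℝ → ℝ := fun x => rInner (Complex.I * v t x) (deriv (v t) x) with hgdef
  set g' : ℝ → ℝ := fun x => -rInner (v t x) (deriv (fun s => v s x) t) with hg'def
  have cg : Continuous g := continuous_rInner.comp ((continuous_const.mul cv).prodMk cvx)
  have cg' : Continuous g' := (continuous_rInner.comp (cv.prodMk cvt)).neg
  have hg : ∀ x, HasDerivAt g (g' x) x := by
    intro x
    have h1 : HasDerivAt (fun y => Complex.I * v t y) (Complex.I * deriv (v t) x) x :=
      (((hX1 t).diff x).hasDerivAt).const_mul Complex.I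
    have h2 : HasDerivAt (deriv (v t)) (deriv (deriv (v t)) x) x :=
      ((hxdiff2 t) x).hasDerivAt
    have h3 := hasDerivAt_rInner h1 h2
    have h4 := gp_pointwise (v t x) (deriv (v t) x) (deriv (deriv (v t)) x)
      (deriv (fun s => v s x) t) (‖v t x‖ ^ 2 - 1) (hGP t x)
    rw [hg'def]
    convert h3 using 1
    exact h4.symm
  have hu : ∀ x, HasDerivAt φ (deriv φ x) x := fun x => (hφ.differentiable (by simp) x).hasDerivAt
  have huv' : Integrable (φ * g') :=
    (hφcont.mul cg').integrable_of_hasCompactSupport hφc.mul_right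
  have hu'v : Integrable (deriv φ * g) :=
    (hφ'cont.mul cg).integrable_of_hasCompactSupport hφ'c.mul_right
  have huv : Integrable (φ * g) :=
    (hφcont.mul cg).integrable_of_hasCompactSupport hφc.mul_right
  have hibp := integral_mul_deriv_eq_deriv_mul_of_integrable (fun x _ => hu x) (fun x _ => hg x) huv' hu'v huv
  -- conclude
  refine hder.congr_deriv ?_
  have e1 : ∫ x, g x * deriv φ x = ∫ x, deriv φ x * g x := by
    congr 1; funext x; ring
  have e2 : ∫ x, F' t x = ∫ x, (-2 : ℝ) * (φ x * g' x) := by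
    congr 1; funext x
    simp only [hF'def, hg'def]; ring
  rw [e1, e2, integral_const_mul, hibp]
  ring
end
end

section
/- Energy and renormalized momentum of the gray solitons: for 0 < c < √2, the travelling wave 𝔳_c(x) = √((2−c²)/2) tanh(√(2−c²) x / 2) + i c/√2 vanishes nowhere and satisfies p(𝔳_c) = π/2 − arctan( c/√(2−c²) ) − (c/2)√(2−c²) and E(𝔳_c) = (2−c²)^{3/2}/3; consequently (d/dc) p(𝔳_c) = −√(2−c²), so c ↦ p(𝔳_c) is a decreasing diffeomorphism from (0,√2) onto (0, π/2). -/
open MeasureTheory Filter Set Topology Real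

noncomputable section

/-- The gray soliton profile `𝔳_c(x) = √((2-c²)/2) tanh(√(2-c²) x / 2) + i c/√2`. -/
def grayProfile (c : ℝ) (x : ℝ) : ℂ :=
  (Real.sqrt ((2 - c ^ 2) / 2) * Real.tanh (Real.sqrt (2 - c ^ 2) * x / 2) : ℝ)
    + Complex.I * (c / Real.sqrt 2 : ℝ)

/-- The renormalized momentum of the gray soliton, as a function of the speed. -/
def grayMomentum (c : ℝ) : ℝ :=
  π / 2 - Real.arctan (c / Real.sqrt (2 - c ^ 2)) - (c / 2) * Real.sqrt (2 - c ^ 2)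

/-!
Write `𝔳_c = a tanh (b x) + i d` with `a = √(2 - c²)/√2`, `b = √(2 - c²)/2`, `d = c/√2`, so that
`a² + d² = 1`. Every integrand is then a function of `t = tanh (b x)` times `dt/dx = b (1 - t²)`,
and its integral over `ℝ` is `G 1 - G (-1)` for a primitive `G`. For the energy both densities
are multiples of `(1 - t²)²`. For the momentum, a polar form `ρ e^{iφ}` of `𝔳_c` has
`ρ² φ' = Im (conj 𝔳_c 𝔳_c') = -d 𝔳_c'` because `𝔳_c'` is real, which gives
`(ρ² - 1) φ' = d a³ (1 - t²) / (d² + a² t²) · b (1 - t²)`, with primitive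
`arctan (a t / d) - a d t` in `t`. Finally `p = grayMomentum` has `p' = -√(2 - c²) < 0`,
`p 0 = π/2` and `p → 0` as `c → √2`, so by the intermediate value theorem it maps `(0, √2)`
bijectively onto `(0, π/2)`.
-/

namespace Real

theorem hasDerivAt_tanh (x : ℝ) : HasDerivAt tanh (1 - tanh x ^ 2) x := by
  have h := (hasDerivAt_sinh x).div (hasDerivAt_cosh x) (cosh_pos x).ne'
  rw [show tanh = sinh / cosh from funext tanh_eq_sinh_div_cosh]
  refine h.congr_deriv ?_
  have hcosh := (cosh_pos x).ne'
  rw [Pi.div_apply]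
  field_simp

theorem tanh_eq_one_sub_two_div (x : ℝ) : tanh x = 1 - 2 / (exp (2 * x) + 1) := by
  have h : exp (2 * x) = exp x * exp x := by rw [← exp_add, two_mul]
  rw [tanh_eq_sinh_div_cosh, sinh_eq, cosh_eq, h, exp_neg]
  field_simp
  ring

theorem tendsto_tanh_atTop : Tendsto tanh atTop (𝓝 1) := by
  have h : Tendsto (fun x : ℝ => exp (2 * x) + 1) atTop atTop :=
    tendsto_atTop_add_const_right _ 1
      (tendsto_exp_atTop.comp (tendsto_id.const_mul_atTop two_pos))
  simpa only [sub_zero, ← tanh_eq_one_sub_two_div] using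
    (tendsto_const_nhds (x := (1 : ℝ))).sub ((tendsto_const_nhds (x := (2 : ℝ))).div_atTop h)

theorem tendsto_tanh_atBot : Tendsto tanh atBot (𝓝 (-1)) := by
  simpa [Function.comp_def] using (tendsto_tanh_atTop.comp tendsto_neg_atBot_atTop).neg

end Real

theorem integrable_of_hasDerivAt_of_nonneg_of_tendsto {F f : ℝ → ℝ} {A B : ℝ}
    (hF : ∀ x, HasDerivAt F (f x) x) (hf : ∀ x, 0 ≤ f x)
    (hbot : Tendsto F atBot (𝓝 A)) (htop : Tendsto F atTop (𝓝 B)) : Integrable f := by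
  have hint (a b : ℝ) : IntervalIntegrable f volume a b :=
    intervalIntegral.intervalIntegrable_deriv_of_nonneg
      (fun x _ => (hF x).continuousAt.continuousWithinAt) (fun x _ => hF x) (fun x _ => hf x)
  refine integrable_of_intervalIntegral_norm_tendsto (B - A) (fun n => (hint (-n) n).1)
    tendsto_neg_atTop_atBot tendsto_id ?_
  have hFTC (n : ℝ) : ∫ x in -n..n, ‖f x‖ = F n - F (-n) := by
    simp only [Real.norm_of_nonneg (hf _)]
    exact intervalIntegral.integral_eq_sub_of_hasDerivAt (fun x _ => hF x) (hint _ _)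
  simpa only [hFTC, Function.comp_def] using htop.sub (hbot.comp tendsto_neg_atTop_atBot)

theorem integral_of_hasDerivAt_of_nonneg_of_tendsto {F f : ℝ → ℝ} {A B : ℝ}
    (hF : ∀ x, HasDerivAt F (f x) x) (hf : ∀ x, 0 ≤ f x)
    (hbot : Tendsto F atBot (𝓝 A)) (htop : Tendsto F atTop (𝓝 B)) : ∫ x, f x = B - A :=
  integral_of_hasDerivAt_of_tendsto hF
    (integrable_of_hasDerivAt_of_nonneg_of_tendsto hF hf hbot htop) hbot htop

open ComplexConjugate in
theorem im_conj_mul_deriv_of_polar {v : ℝ → ℂ} {ρ φ : ℝ → ℝ} {v' : ℂ} {x : ℝ}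
    (hv : ∀ y, v y = ρ y * Complex.exp (φ y * Complex.I))
    (hρ : DifferentiableAt ℝ ρ x) (hφ : DifferentiableAt ℝ φ x) (hv' : HasDerivAt v v' x) :
    (conj (v x) * v').im = ρ x ^ 2 * deriv φ x := by
  have hpolar : HasDerivAt v ((deriv ρ x + ρ x * deriv φ x * Complex.I)
      * Complex.exp (φ x * Complex.I)) x := by
    rw [show v = fun y => (ρ y : ℂ) * Complex.exp (φ y * Complex.I) from funext hv]
    exact (hρ.hasDerivAt.ofReal_comp.mul
      (hφ.hasDerivAt.ofReal_comp.mul_const Complex.I).cexp).congr_deriv (by ring)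
  set e := Complex.exp (φ x * Complex.I)
  have he : conj e * e = 1 := by
    rw [← Complex.exp_conj, ← Complex.exp_add]
    simp
  rw [hv'.unique hpolar, hv x, map_mul, Complex.conj_ofReal]
  calc ((ρ x : ℂ) * conj e * ((deriv ρ x + ρ x * deriv φ x * Complex.I) * e)).im
      = (((ρ x * deriv ρ x : ℝ) + (ρ x ^ 2 * deriv φ x : ℝ) * Complex.I) * (conj e * e)).im := by
        congr 1
        push_cast
        ring
    _ = ρ x ^ 2 * deriv φ x := by rw [he, mul_one]; simp [Complex.mul_im, sq]

theorem integral_comp_tanh_mul_sech_sq {G g : ℝ → ℝ} {b : ℝ} (hb : 0 < b)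
    (hG : ∀ t, HasDerivAt G (g t) t) (hg : ∀ t ∈ Ioo (-1 : ℝ) 1, 0 ≤ g t) :
    ∫ x, g (tanh (b * x)) * (b * (1 - tanh (b * x) ^ 2)) = G 1 - G (-1) := by
  have hinner (x : ℝ) : HasDerivAt (fun y => tanh (b * y)) (b * (1 - tanh (b * x) ^ 2)) x :=
    ((hasDerivAt_tanh (b * x)).comp x ((hasDerivAt_id x).const_mul b)).congr_deriv
      (by simp only [mul_one]; ring)
  refine integral_of_hasDerivAt_of_nonneg_of_tendsto (fun x => (hG _).comp x (hinner x))
    (fun x => ?_) ?_ ?_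
  · obtain ⟨hlo, hhi⟩ : tanh (b * x) ∈ Ioo (-1 : ℝ) 1 := tanh_bijOn.mapsTo (mem_univ _)
    exact mul_nonneg (hg _ ⟨hlo, hhi⟩) (mul_nonneg hb.le (by nlinarith))
  · exact (hG (-1)).continuousAt.tendsto.comp
      (tendsto_tanh_atBot.comp (tendsto_id.const_mul_atBot hb))
  · exact (hG 1).continuousAt.tendsto.comp
      (tendsto_tanh_atTop.comp (tendsto_id.const_mul_atTop hb))

theorem integral_one_sub_tanh_mul_sq_sq {b : ℝ} (hb : 0 < b) :
    ∫ x, (1 - tanh (b * x) ^ 2) ^ 2 = 4 / (3 * b) := by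
  have hG (t : ℝ) : HasDerivAt (fun t => (t - t ^ 3 / 3) / b) ((1 - t ^ 2) / b) t :=
    ((hasDerivAt_id' t).sub ((hasDerivAt_pow 3 t).div_const 3)).div_const b
      |>.congr_deriv (by norm_num)
  have := integral_comp_tanh_mul_sech_sq hb hG
    (fun t ht => div_nonneg (by nlinarith [ht.1, ht.2]) hb.le)
  convert this using 1
  · congr 1 with x
    field_simp
  · field_simp
    ring

def tanhKink (a b d x : ℝ) : ℂ := ((a * tanh (b * x) : ℝ) : ℂ) + Complex.I * d

section TanhKink

variable {a b d : ℝ}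

theorem tanhKink_re (x : ℝ) : (tanhKink a b d x).re = a * tanh (b * x) := by
  simp only [tanhKink, Complex.add_re, Complex.mul_re, Complex.ofReal_re, Complex.ofReal_im,
    Complex.I_re, Complex.I_im]
  ring

theorem tanhKink_im (x : ℝ) : (tanhKink a b d x).im = d := by
  simp only [tanhKink, Complex.add_im, Complex.mul_im, Complex.ofReal_re, Complex.ofReal_im,
    Complex.I_re, Complex.I_im]
  ring

theorem norm_tanhKink_sq (x : ℝ) :
    ‖tanhKink a b d x‖ ^ 2 = a ^ 2 * tanh (b * x) ^ 2 + d ^ 2 := by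
  rw [Complex.sq_norm, Complex.normSq_apply, tanhKink_re, tanhKink_im]
  ring

theorem one_sub_norm_tanhKink_sq (had : a ^ 2 + d ^ 2 = 1) (x : ℝ) :
    1 - ‖tanhKink a b d x‖ ^ 2 = a ^ 2 * (1 - tanh (b * x) ^ 2) := by
  rw [norm_tanhKink_sq]
  linear_combination -had

theorem hasDerivAt_tanhKink (x : ℝ) :
    HasDerivAt (tanhKink a b d) ((a * b * (1 - tanh (b * x) ^ 2) : ℝ) : ℂ) x := by
  have h := ((hasDerivAt_tanh (b * x)).comp x ((hasDerivAt_id x).const_mul b)).const_mul a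
  exact (h.ofReal_comp.add_const _).congr_deriv (by simp only [mul_one]; push_cast; ring)

theorem energy_tanhKink (hb : 0 < b) (had : a ^ 2 + d ^ 2 = 1) :
    energy (tanhKink a b d) = (2 * a ^ 2 * b ^ 2 + a ^ 4) / (3 * b) := by
  have hkinetic (x : ℝ) : ‖deriv (tanhKink a b d) x‖ ^ 2
      = (a * b) ^ 2 * (1 - tanh (b * x) ^ 2) ^ 2 := by
    rw [(hasDerivAt_tanhKink x).deriv, Complex.norm_real, Real.norm_eq_abs, sq_abs]
    ring
  have hpotential (x : ℝ) : (1 - ‖tanhKink a b d x‖ ^ 2) ^ 2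
      = a ^ 4 * (1 - tanh (b * x) ^ 2) ^ 2 := by
    rw [one_sub_norm_tanhKink_sq had]
    ring
  simp only [energy, hkinetic, hpotential, integral_const_mul, integral_one_sub_tanh_mul_sq_sq hb]
  field_simp
  ring

theorem sq_sub_one_mul_deriv_of_tanhKink_eq_polar (hd : d ≠ 0) (had : a ^ 2 + d ^ 2 = 1)
    {ρ φ : ℝ → ℝ} (hv : ∀ y, tanhKink a b d y = ρ y * Complex.exp (φ y * Complex.I))
    (hρ : Differentiable ℝ ρ) (hφ : Differentiable ℝ φ) (x : ℝ) :
    (ρ x ^ 2 - 1) * deriv φ x =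
      d * a ^ 3 * (1 - tanh (b * x) ^ 2) / (d ^ 2 + a ^ 2 * tanh (b * x) ^ 2)
        * (b * (1 - tanh (b * x) ^ 2)) := by
  have hρsq : ρ x ^ 2 = d ^ 2 + a ^ 2 * tanh (b * x) ^ 2 := by
    rw [add_comm, ← norm_tanhKink_sq x, hv x, norm_mul, Complex.norm_exp_ofReal_mul_I, mul_one,
      Complex.norm_real, Real.norm_eq_abs, sq_abs]
  have hρ0 : ρ x ^ 2 ≠ 0 := by rw [hρsq]; positivity
  have hangular : ρ x ^ 2 * deriv φ x = -(d * (a * b * (1 - tanh (b * x) ^ 2))) := by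
    rw [← im_conj_mul_deriv_of_polar hv (hρ x) (hφ x) (hasDerivAt_tanhKink x), Complex.mul_im,
      Complex.conj_re, Complex.conj_im, Complex.ofReal_re, Complex.ofReal_im, tanhKink_im]
    ring
  have hφ' : deriv φ x = -(d * (a * b * (1 - tanh (b * x) ^ 2))) / ρ x ^ 2 := by
    rw [eq_div_iff hρ0]
    linear_combination hangular
  have hρsq_sub_one : ρ x ^ 2 - 1 = -(a ^ 2 * (1 - tanh (b * x) ^ 2)) := by
    rw [hρsq]
    linear_combination had
  rw [hρsq_sub_one, hφ', hρsq]
  field_simp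

theorem momentum_tanhKink (ha : 0 ≤ a) (hb : 0 < b) (hd : 0 < d) (had : a ^ 2 + d ^ 2 = 1)
    {ρ φ : ℝ → ℝ} (hv : ∀ y, tanhKink a b d y = ρ y * Complex.exp (φ y * Complex.I))
    (hρ : Differentiable ℝ ρ) (hφ : Differentiable ℝ φ) :
    (1 / 2) * ∫ x, (ρ x ^ 2 - 1) * deriv φ x = arctan (a / d) - a * d := by
  have hG (t : ℝ) : HasDerivAt (fun t => arctan (a * t / d) - a * d * t)
      (d * a ^ 3 * (1 - t ^ 2) / (d ^ 2 + a ^ 2 * t ^ 2)) t := by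
    refine ((((hasDerivAt_id' t).const_mul a).div_const d).arctan.sub
      ((hasDerivAt_id' t).const_mul (a * d))).congr_deriv ?_
    have : d ^ 2 + a ^ 2 * t ^ 2 ≠ 0 := by positivity
    field_simp
    linear_combination -a * had
  have hg (t : ℝ) (ht : t ∈ Ioo (-1 : ℝ) 1) :
      0 ≤ d * a ^ 3 * (1 - t ^ 2) / (d ^ 2 + a ^ 2 * t ^ 2) := by
    have : 0 ≤ 1 - t ^ 2 := by nlinarith [ht.1, ht.2]
    positivity
  simp only [sq_sub_one_mul_deriv_of_tanhKink_eq_polar hd.ne' had hv hρ hφ,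
    integral_comp_tanh_mul_sech_sq hb hG hg]
  rw [mul_one, mul_neg_one, neg_div, arctan_neg]
  ring

end TanhKink

section GraySoliton

variable {c : ℝ}

theorem grayProfile_eq_tanhKink (c : ℝ) :
    grayProfile c = tanhKink (√(2 - c ^ 2) / √2) (√(2 - c ^ 2) / 2) (c / √2) := by
  funext x
  rw [grayProfile, tanhKink, sqrt_div' _ zero_le_two, mul_div_right_comm]

theorem grayProfile_ne_zero (hc : c ≠ 0) (x : ℝ) : grayProfile c x ≠ 0 := by
  intro h
  have him := congrArg Complex.im h
  rw [grayProfile_eq_tanhKink, tanhKink_im, Complex.zero_im, div_eq_zero_iff] at him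
  exact him.elim hc (by positivity)

theorem grayProfile_params_sq_add_sq (hc : c ^ 2 ≤ 2) :
    (√(2 - c ^ 2) / √2) ^ 2 + (c / √2) ^ 2 = 1 := by
  rw [div_pow, div_pow, sq_sqrt (by linarith), sq_sqrt zero_le_two]
  ring

theorem energy_grayProfile (hc : c ^ 2 < 2) :
    energy (grayProfile c) = √(2 - c ^ 2) ^ 3 / 3 := by
  have hμ : 0 < √(2 - c ^ 2) := sqrt_pos.mpr (by linarith)
  rw [grayProfile_eq_tanhKink,
    energy_tanhKink (by positivity) (grayProfile_params_sq_add_sq hc.le)]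
  field_simp
  rw [show √2 ^ 4 = (√2 ^ 2) ^ 2 by ring, sq_sqrt zero_le_two]
  norm_num

theorem momentum_grayProfile (hc : 0 < c) (hc2 : c ^ 2 < 2) {ρ φ : ℝ → ℝ}
    (hv : ∀ x, grayProfile c x = ρ x * Complex.exp (φ x * Complex.I))
    (hρ : Differentiable ℝ ρ) (hφ : Differentiable ℝ φ) :
    (1 / 2) * ∫ x, (ρ x ^ 2 - 1) * deriv φ x = grayMomentum c := by
  have hμ : 0 < √(2 - c ^ 2) := sqrt_pos.mpr (by linarith)
  rw [grayProfile_eq_tanhKink] at hv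
  rw [momentum_tanhKink (by positivity) (by positivity) (by positivity)
    (grayProfile_params_sq_add_sq hc2.le) hv hρ hφ, grayMomentum,
    div_div_div_cancel_right₀ (sqrt_ne_zero'.mpr two_pos), ← inv_div,
    arctan_inv_of_pos (by positivity)]
  field_simp
  rw [sq_sqrt zero_le_two]
  ring

end GraySoliton

theorem hasDerivAt_grayMomentum {c : ℝ} (hc : c ^ 2 < 2) :
    HasDerivAt grayMomentum (-√(2 - c ^ 2)) c := by
  have hμ : 0 < √(2 - c ^ 2) := sqrt_pos.mpr (by linarith)
  have hμsq : √(2 - c ^ 2) ^ 2 = 2 - c ^ 2 := sq_sqrt (by linarith)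
  have hsqrt : HasDerivAt (fun y => √(2 - y ^ 2)) (-c / √(2 - c ^ 2)) c := by
    refine (((hasDerivAt_pow 2 c).const_sub 2).sqrt (by linarith)).congr_deriv ?_
    field_simp
    ring
  have h := ((hasDerivAt_const c (π / 2)).sub ((hasDerivAt_id' c).div hsqrt hμ.ne').arctan).sub
    (((hasDerivAt_id' c).div_const 2).mul hsqrt)
  refine h.congr_deriv ?_
  simp only [Pi.div_apply]
  field_simp
  rw [hμsq]
  ring

theorem strictAntiOn_grayMomentum : StrictAntiOn grayMomentum (Ico 0 √2) := by
  have hderiv (y : ℝ) (hy : y ∈ Ico 0 √2) : HasDerivAt grayMomentum (-√(2 - y ^ 2)) y :=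
    hasDerivAt_grayMomentum ((lt_sqrt hy.1).1 hy.2)
  refine strictAntiOn_of_deriv_neg (convex_Ico 0 √2)
    (fun y hy => (hderiv y hy).continuousAt.continuousWithinAt) fun y hy => ?_
  rw [interior_Ico] at hy
  rw [(hderiv y (Ioo_subset_Ico_self hy)).deriv, neg_lt_zero, sqrt_pos, sub_pos]
  exact (lt_sqrt hy.1.le).1 hy.2

theorem grayMomentum_zero : grayMomentum 0 = π / 2 := by
  simp [grayMomentum]

/-- `grayMomentum` is not continuous at `√2`, where `c / √(2 - c²) = c / 0 = 0`; the endpoint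
enters only through this one-sided limit. -/
theorem tendsto_grayMomentum_nhdsLT_sqrt_two : Tendsto grayMomentum (𝓝[<] √2) (𝓝 0) := by
  have hs : (0 : ℝ) < √2 := sqrt_pos.mpr two_pos
  have hid : Tendsto (fun y : ℝ => y) (𝓝[<] √2) (𝓝 √2) := nhdsWithin_le_nhds
  have hμ : Tendsto (fun y : ℝ => √(2 - y ^ 2)) (𝓝[<] √2) (𝓝[>] 0) := by
    refine tendsto_nhdsWithin_of_tendsto_nhds_of_eventually_within _ ?_ ?_
    · have hcont : Continuous fun y : ℝ => √(2 - y ^ 2) := by fun_prop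
      simpa [sq_sqrt zero_le_two] using (hcont.tendsto √2).mono_left nhdsWithin_le_nhds
    · filter_upwards [Ioo_mem_nhdsLT hs] with y hy
      exact sqrt_pos.mpr (sub_pos.mpr ((lt_sqrt hy.1.le).1 hy.2))
  have harctan : Tendsto (fun y => arctan (y / √(2 - y ^ 2))) (𝓝[<] √2) (𝓝 (π / 2)) :=
    (tendsto_arctan_atTop.mono_right nhdsWithin_le_nhds).comp
      (hid.pos_mul_atTop hs (tendsto_inv_nhdsGT_zero.comp hμ))
  have h := ((tendsto_const_nhds (x := π / 2)).sub harctan).sub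
    ((hid.div_const 2).mul (tendsto_nhdsWithin_iff.1 hμ).1)
  rwa [sub_self, mul_zero, sub_zero] at h

theorem grayMomentum_mem_Ioo {y : ℝ} (hy : y ∈ Ioo 0 √2) :
    grayMomentum y ∈ Ioo 0 (π / 2) := by
  obtain ⟨z, hyz, hz⟩ := exists_between hy.2
  have hz_mem : z ∈ Ico 0 √2 := ⟨hy.1.le.trans hyz.le, hz⟩
  have hnonneg : 0 ≤ grayMomentum z := by
    refine le_of_tendsto tendsto_grayMomentum_nhdsLT_sqrt_two ?_
    filter_upwards [Ioo_mem_nhdsLT hz] with w hw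
    exact (strictAntiOn_grayMomentum hz_mem ⟨hy.1.le.trans (hyz.trans hw.1).le, hw.2⟩ hw.1).le
  refine ⟨hnonneg.trans_lt (strictAntiOn_grayMomentum ⟨hy.1.le, hy.2⟩ hz_mem hyz), ?_⟩
  rw [← grayMomentum_zero]
  exact strictAntiOn_grayMomentum ⟨le_rfl, hy.1.trans hy.2⟩ ⟨hy.1.le, hy.2⟩ hy.1

theorem bijOn_grayMomentum : BijOn grayMomentum (Ioo 0 √2) (Ioo 0 (π / 2)) := by
  refine ⟨fun y hy => grayMomentum_mem_Ioo hy,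
    strictAntiOn_grayMomentum.injOn.mono Ioo_subset_Ico_self, fun z hz => ?_⟩
  obtain ⟨y₀, hy₀z, hy₀⟩ := ((tendsto_grayMomentum_nhdsLT_sqrt_two.eventually
    (eventually_lt_nhds hz.1)).and (Ioo_mem_nhdsLT (sqrt_pos.mpr two_pos))).exists
  have hcont : ContinuousOn grayMomentum (Icc 0 y₀) := fun y hy =>
    (hasDerivAt_grayMomentum ((lt_sqrt hy.1).1 (hy.2.trans_lt hy₀.2))).continuousAt
      |>.continuousWithinAt
  have hz_mem : z ∈ Icc (grayMomentum y₀) (grayMomentum 0) := by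
    rw [grayMomentum_zero]
    exact ⟨hy₀z.le, hz.2.le⟩
  obtain ⟨y, hy, rfl⟩ := intermediate_value_Icc' hy₀.1.le hcont hz_mem
  refine ⟨y, ⟨hy.1.lt_of_ne ?_, hy.2.trans_lt hy₀.2⟩, rfl⟩
  rintro rfl
  exact hz.2.ne grayMomentum_zero

/-- **Energy and renormalized momentum of the gray solitons**: for `0 < c < √2`,
`𝔳_c` vanishes nowhere, `p(𝔳_c) = π/2 - arctan(c/√(2-c²)) - (c/2)√(2-c²)`,
`E(𝔳_c) = (2-c²)^{3/2}/3`, `(d/dc) p(𝔳_c) = -√(2-c²)`, and `c ↦ p(𝔳_c)` is a decreasing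
diffeomorphism from `(0, √2)` onto `(0, π/2)`. -/
theorem gray_soliton_energy_momentum (c : ℝ) (hc : 0 < c) (hc' : c < Real.sqrt 2) :
    (∀ x : ℝ, grayProfile c x ≠ 0) ∧
    (∀ ρ φ : ℝ → ℝ, (∀ x, 0 < ρ x) → Differentiable ℝ ρ → Differentiable ℝ φ →
      (∀ x, grayProfile c x = (ρ x : ℂ) * Complex.exp (φ x * Complex.I)) →
      (1 / 2) * ∫ x, (ρ x ^ 2 - 1) * deriv φ x = grayMomentum c) ∧
    energy (grayProfile c) = (Real.sqrt (2 - c ^ 2)) ^ 3 / 3 ∧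
    HasDerivAt grayMomentum (-Real.sqrt (2 - c ^ 2)) c ∧
    StrictAntiOn grayMomentum (Ioo 0 (Real.sqrt 2)) ∧
    Set.BijOn grayMomentum (Ioo 0 (Real.sqrt 2)) (Ioo 0 (π / 2)) := by
  have hc2 : c ^ 2 < 2 := (lt_sqrt hc.le).1 hc'
  exact ⟨grayProfile_ne_zero hc.ne',
    fun ρ φ _ hρ hφ hv => momentum_grayProfile hc hc2 hv hρ hφ,
    energy_grayProfile hc2, hasDerivAt_grayMomentum hc2,
    strictAntiOn_grayMomentum.mono Ioo_subset_Ico_self, bijOn_grayMomentum⟩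
end
end
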